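/- arXiv:1808.09624 — 3 statements merged into one kernel-verified Lean document; each statement's English description precedes it below -/
import Mathlib

section
/- Let Ω ⊆ ℝ^n be a domain with Lebesgue measure and let p_0, p_1, …, p_n be variable exponents on Ω. Let a : Ω × ℝ × ℝ^n → ℝ^n satisfy the coercivity condition a(x,s_0,s)·s ≥ ā·P(x,s) − φ(x) for a.e. x and all (s_0,s), where ā > 0 and 0 ≤ φ ∈ L_1(Ω); let b : Ω × ℝ × ℝ^n → ℝ satisfy b(x,s_0,s)·s_0 ≥ 0; let f ∈ L_1(Ω). Let u : Ω → ℝ and w : Ω → ℝ^n be measurable with B := b(·,u,w) ∈ L_1(Ω), and suppose that for every k > 0 the functions |u|^{p_0(x)−2}u·T_k(u) and χ_{{|u|<k}}·a(x,u,w)·w are integrable and the entropy inequality with test function ξ = 0 holds: ∫_Ω (B + |u|^{p_0(x)−2}u + f)·T_k(u) dx + ∫_{{x : |u|<k}} a(x,u,w)·w dx ≤ 0. Then for every k > 0: ā·∫_{{|u|<k}} P(x,w) dx + ∫_{{|u|<k}} |u|^{p_0(x)} dx + k·∫_{{|u|≥k}} |u|^{p_0(x)−1} dx ≤ k·‖f‖_{L_1(Ω)}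 + ‖φ‖_{L_1(Ω)}. -/
open MeasureTheory Filter Topology Real

noncomputable section

/-- A variable exponent on a set `Ω`: a continuous bounded function with infimum `> 1`
and supremum `< ∞`. -/
def IsVarExp {n : ℕ} (Ω : Set (Fin n → ℝ)) (p : (Fin n → ℝ) → ℝ) : Prop :=
  ContinuousOn p Ω ∧ ∃ pm pM : ℝ, 1 < pm ∧ ∀ x ∈ Ω, pm ≤ p x ∧ p x ≤ pM

/-- The conjugate exponent `p'(x) = p(x)/(p(x)-1)`. -/
def pConj {n : ℕ} (p : (Fin n → ℝ) → ℝ) (x : Fin n → ℝ) : ℝ := p x / (p x - 1)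

/-- Truncation at level `k`: `T_k(r) = max(-k, min(k, r))`. -/
def Tk (k r : ℝ) : ℝ := max (-k) (min k r)

/-- Euclidean-style dot product on `Fin n → ℝ`. -/
def dotP {n : ℕ} (s t : Fin n → ℝ) : ℝ := ∑ i, s i * t i

/-- The anisotropic modular integrand `P(x,s) = Σᵢ |sᵢ|^{pᵢ(x)}`. -/
def Pfun {n : ℕ} (p : Fin n → (Fin n → ℝ) → ℝ) (x s : Fin n → ℝ) : ℝ :=
  ∑ i, |s i| ^ p i x

/-- The modular `ρ_{p(·)}(v) = ∫_Ω |v(x)|^{p(x)} dx`. -/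
def modular {n : ℕ} (Ω : Set (Fin n → ℝ)) (p : (Fin n → ℝ) → ℝ)
    (v : (Fin n → ℝ) → ℝ) : ℝ :=
  ∫ x in Ω, |v x| ^ p x

/-- The Luxemburg norm `‖v‖_{p(·)} = inf { c > 0 : ρ_{p(·)}(v/c) ≤ 1 }`. -/
def luxNorm {n : ℕ} (Ω : Set (Fin n → ℝ)) (p : (Fin n → ℝ) → ℝ)
    (v : (Fin n → ℝ) → ℝ) : ℝ :=
  sInf {c : ℝ | 0 < c ∧ modular Ω p (fun x => v x / c) ≤ 1}

/-- Smooth compactly supported function with support inside `Ω`. -/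
def SmoothCpt {n : ℕ} (Ω : Set (Fin n → ℝ)) (φ : (Fin n → ℝ) → ℝ) : Prop :=
  ContDiff ℝ (⊤ : ℕ∞) φ ∧ HasCompactSupport φ ∧ tsupport φ ⊆ Ω

/-- `C¹` function compactly supported inside `Ω`. -/
def C01 {n : ℕ} (Ω : Set (Fin n → ℝ)) (ξ : (Fin n → ℝ) → ℝ) : Prop :=
  ContDiff ℝ 1 ξ ∧ HasCompactSupport ξ ∧ tsupport ξ ⊆ Ω

/-- The gradient of a scalar function on `ℝⁿ`. -/
def grad {n : ℕ} (ξ : (Fin n → ℝ) → ℝ) (x : Fin n → ℝ) : Fin n → ℝ :=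
  fun i => fderiv ℝ ξ x (Pi.single i 1)

/-! Split the entropy inequality along the three summands of its first integrand. As `T_k`
has the sign of its argument, `b(x,u,w)·T_k(u) ≥ 0`; as `|T_k| ≤ k`, the `f`-term is at least
`-k‖f‖₁`; and `|u|^{p₀-2} u T_k(u)` is `|u|^{p₀}` on `{|u| < k}` and `k|u|^{p₀-1}` on
`{|u| ≥ k}`. Coercivity, with `φ ≤ |φ|`, bounds the remaining integral of `a(x,u,w)·w` over
`{|u| < k}` from below by `ā ∫ P(x,w) - ‖φ‖₁`. -/

section Truncation

variable {k r : ℝ}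

theorem continuous_Tk (k : ℝ) : Continuous (Tk k) :=
  continuous_const.max (continuous_const.min continuous_id)

theorem abs_Tk_le (hk : 0 ≤ k) (r : ℝ) : |Tk k r| ≤ k :=
  abs_le.mpr ⟨le_max_left _ _, max_le (by linarith) (min_le_left _ _)⟩

theorem Tk_of_abs_le (h : |r| ≤ k) : Tk k r = r := by
  rw [abs_le] at h
  rw [Tk, min_eq_right h.2, max_eq_right h.1]

theorem mul_Tk_of_le_abs (hk : 0 ≤ k) (h : k ≤ |r|) : r * Tk k r = k * |r| := by
  rcases le_total r 0 with hr | hr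
  · rw [abs_of_nonpos hr] at h
    rw [Tk, min_eq_right (by linarith), max_eq_left (by linarith), abs_of_nonpos hr]
    ring
  · rw [abs_of_nonneg hr] at h
    rw [Tk, min_eq_left h, max_eq_right (by linarith), abs_of_nonneg hr]
    ring

theorem mul_Tk_nonneg {s : ℝ} (hk : 0 ≤ k) (h : 0 ≤ s * r) : 0 ≤ s * Tk k r := by
  rcases lt_trichotomy r 0 with hr | rfl | hr
  · have hs : s ≤ 0 := nonpos_of_mul_nonneg_left h hr
    exact mul_nonneg_of_nonpos_of_nonpos hs
      (max_le (by linarith) ((min_le_right _ _).trans hr.le))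
  · simp [Tk, hk]
  · have hs : 0 ≤ s := nonneg_of_mul_nonneg_left h hr
    exact mul_nonneg hs (le_max_of_le_right (le_min hk hr.le))

end Truncation

theorem abs_rpow_sub_two_mul_self_mul_self {p : ℝ} (hp : p ≠ 0) (r : ℝ) :
    |r| ^ (p - 2) * r * r = |r| ^ p := by
  rcases eq_or_ne r 0 with rfl | hr
  · simp [Real.zero_rpow hp]
  · have hr' : |r| ≠ 0 := abs_ne_zero.mpr hr
    rw [mul_assoc, ← abs_mul_abs_self, ← mul_assoc, ← Real.rpow_add_one hr',
      ← Real.rpow_add_one hr']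
    ring_nf

theorem abs_rpow_sub_two_mul_self_mul_Tk_of_le_abs {k p r : ℝ} (hk : 0 < k) (h : k ≤ |r|) :
    |r| ^ (p - 2) * r * Tk k r = k * |r| ^ (p - 1) := by
  rw [mul_assoc, mul_Tk_of_le_abs hk.le h, show p - 1 = p - 2 + 1 by ring,
    Real.rpow_add_one (hk.trans_le h).ne']
  ring

theorem IsVarExp.one_lt {n : ℕ} {Ω : Set (Fin n → ℝ)} {p : (Fin n → ℝ) → ℝ}
    (hp : IsVarExp Ω p) {x : Fin n → ℝ} (hx : x ∈ Ω) : 1 < p x := by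
  obtain ⟨-, pm, _, hpm, hbounds⟩ := hp
  linarith [(hbounds x hx).1]

theorem Pfun_nonneg {n : ℕ} (p : Fin n → (Fin n → ℝ) → ℝ) (x s : Fin n → ℝ) : 0 ≤ Pfun p x s :=
  Finset.sum_nonneg fun i _ => by positivity

section Integrals

variable {α : Type*} [MeasurableSpace α] {μ : Measure α} {k : ℝ}

theorem MeasureTheory.Integrable.mul_Tk {f v : α → ℝ} (hf : Integrable f μ)
    (hv : AEMeasurable v μ) (hk : 0 ≤ k) : Integrable (fun x => f x * Tk k (v x)) μ :=
  hf.mul_bdd ((continuous_Tk k).measurable.comp_aemeasurable hv).aestronglyMeasurable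
    (ae_of_all _ fun _ => (Real.norm_eq_abs _).trans_le (abs_Tk_le hk _))

theorem integral_add_add_mul {f g h t : α → ℝ} (hf : Integrable (fun x => f x * t x) μ)
    (hg : Integrable (fun x => g x * t x) μ) (hh : Integrable (fun x => h x * t x) μ) :
    ∫ x, (f x + g x + h x) * t x ∂μ =
      (∫ x, f x * t x ∂μ) + (∫ x, g x * t x ∂μ) + ∫ x, h x * t x ∂μ := by
  simp only [add_mul]
  rw [integral_add _ hh, integral_add hf hg]
  exact hf.add hg

theorem integral_mul_Tk_nonneg {g v : α → ℝ} (hk : 0 ≤ k) (h : ∀ᵐ x ∂μ, 0 ≤ g x * v x) :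
    0 ≤ ∫ x, g x * Tk k (v x) ∂μ :=
  integral_nonneg_of_ae (h.mono fun _ hx => mul_Tk_nonneg hk hx)

theorem abs_integral_mul_Tk_le {f v : α → ℝ} (hk : 0 ≤ k) (hf : Integrable f μ) :
    |∫ x, f x * Tk k (v x) ∂μ| ≤ k * ∫ x, |f x| ∂μ := by
  rw [← Real.norm_eq_abs, ← integral_const_mul k fun x => |f x|]
  refine norm_integral_le_of_norm_le (hf.abs.const_mul k) (ae_of_all _ fun x => ?_)
  rw [Real.norm_eq_abs, abs_mul, mul_comm]
  exact mul_le_mul_of_nonneg_right (abs_Tk_le hk _) (abs_nonneg _)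

theorem mul_integral_sub_integral_le_of_ae_le {c : ℝ} {g φ h : α → ℝ} (hc : 0 ≤ c)
    (hg : 0 ≤ᵐ[μ] g) (hφ : Integrable φ μ) (hh : Integrable h μ)
    (hle : ∀ᵐ x ∂μ, c * g x - φ x ≤ h x) :
    c * ∫ x, g x ∂μ - ∫ x, φ x ∂μ ≤ ∫ x, h x ∂μ := by
  have hmono : ∫ x, c * g x ∂μ ≤ ∫ x, h x + φ x ∂μ :=
    integral_mono_of_nonneg (hg.mono fun _ hx => mul_nonneg hc hx) (hh.add hφ)
      (hle.mono fun _ hx => by linarith)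
  rw [integral_const_mul, integral_add hh hφ] at hmono
  linarith

theorem setIntegral_abs_rpow_sub_two_mul_self_mul_Tk {s : Set α} {u p : α → ℝ}
    (hs : MeasurableSet s) (hu : Measurable u) (hk : 0 < k) (hp : ∀ x ∈ s, p x ≠ 0)
    (hint : IntegrableOn (fun x => |u x| ^ (p x - 2) * u x * Tk k (u x)) s μ) :
    ∫ x in s, |u x| ^ (p x - 2) * u x * Tk k (u x) ∂μ =
      ∫ x in s ∩ {x | |u x| < k}, |u x| ^ p x ∂μ +
        k * ∫ x in s ∩ {x | k ≤ |u x|}, |u x| ^ (p x - 1) ∂μ := by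
  have hlt : MeasurableSet {x | |u x| < k} := measurableSet_lt hu.abs measurable_const
  have hsdiff : s \ {x | |u x| < k} = s ∩ {x | k ≤ |u x|} := by
    ext x
    simp only [Set.mem_sdiff, Set.mem_inter_iff, Set.mem_ofPred_eq, not_lt]
  rw [← integral_inter_add_sdiff hlt hint, hsdiff, ← integral_const_mul]
  congr 1
  · refine setIntegral_congr_fun (hs.inter hlt) fun x hx => ?_
    simp only [Tk_of_abs_le hx.2.le, abs_rpow_sub_two_mul_self_mul_self (hp x hx.1)]
  · exact setIntegral_congr_fun (hs.inter (measurableSet_le measurable_const hu.abs))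
      fun x hx => abs_rpow_sub_two_mul_self_mul_Tk_of_le_abs hk hx.2

end Integrals

theorem entropy_solution_apriori_estimate_general
    {n : ℕ}
    (Ω : Set (Fin n → ℝ)) (hΩo : IsOpen Ω)
    (p0 : (Fin n → ℝ) → ℝ) (p : Fin n → (Fin n → ℝ) → ℝ)
    (hp0 : IsVarExp Ω p0)
    (a : (Fin n → ℝ) → ℝ → (Fin n → ℝ) → (Fin n → ℝ))
    (abar : ℝ) (habar : 0 < abar)
    (φ : (Fin n → ℝ) → ℝ) (hφ_int : IntegrableOn φ Ω)
    (ha_coer : ∀ᵐ x ∂(volume.restrict Ω), ∀ (s0 : ℝ) (s : Fin n → ℝ),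
      abar * Pfun p x s - φ x ≤ dotP (a x s0 s) s)
    (b : (Fin n → ℝ) → ℝ → (Fin n → ℝ) → ℝ)
    (hb_sign : ∀ᵐ x ∂(volume.restrict Ω), ∀ (s0 : ℝ) (s : Fin n → ℝ),
      0 ≤ b x s0 s * s0)
    (f : (Fin n → ℝ) → ℝ) (hf : IntegrableOn f Ω)
    (u : (Fin n → ℝ) → ℝ) (w : (Fin n → ℝ) → Fin n → ℝ)
    (hu : Measurable u)
    (hB : IntegrableOn (fun x => b x (u x) (w x)) Ω)
    -- finiteness of the integrals appearing in the entropy inequality with ξ = 0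
    (hint1 : ∀ k > (0:ℝ),
      IntegrableOn (fun x => |u x| ^ (p0 x - 2) * u x * Tk k (u x)) Ω)
    (hint2 : ∀ k > (0:ℝ),
      IntegrableOn (fun x => dotP (a x (u x) (w x)) (w x)) (Ω ∩ {x | |u x| < k}))
    -- the entropy inequality with test function ξ = 0
    (hentropy : ∀ k > (0:ℝ),
      (∫ x in Ω,
          (b x (u x) (w x) + |u x| ^ (p0 x - 2) * u x + f x) * Tk k (u x)) +
        (∫ x in Ω ∩ {x | |u x| < k}, dotP (a x (u x) (w x)) (w x)) ≤ 0) :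
    ∀ k > (0:ℝ),
      abar * (∫ x in Ω ∩ {x | |u x| < k}, Pfun p x (w x)) +
        (∫ x in Ω ∩ {x | |u x| < k}, |u x| ^ p0 x) +
        k * (∫ x in Ω ∩ {x | k ≤ |u x|}, |u x| ^ (p0 x - 1)) ≤
      k * (∫ x in Ω, |f x|) + (∫ x in Ω, |φ x|) := by
  intro k hk
  set A := Ω ∩ {x | |u x| < k}
  have hBT := hB.mul_Tk hu.aemeasurable hk.le
  have hfT := hf.mul_Tk hu.aemeasurable hk.le
  have hb_term : 0 ≤ ∫ x in Ω, b x (u x) (w x) * Tk k (u x) :=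
    integral_mul_Tk_nonneg hk.le (hb_sign.mono fun x hx => hx (u x) (w x))
  have hf_term := (abs_le.mp (abs_integral_mul_Tk_le (v := u) hk.le hf)).1
  have ha_term : abar * (∫ x in A, Pfun p x (w x)) - ∫ x in A, |φ x| ≤
      ∫ x in A, dotP (a x (u x) (w x)) (w x) :=
    mul_integral_sub_integral_le_of_ae_le habar.le (ae_of_all _ fun x => Pfun_nonneg p x (w x))
      (IntegrableOn.mono_set hφ_int.abs Set.inter_subset_left) (hint2 k hk)
      ((ae_restrict_of_ae_restrict_of_subset Set.inter_subset_left ha_coer).mono fun x hx => by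
        linarith [hx (u x) (w x), le_abs_self (φ x)])
  have hφ_le : ∫ x in A, |φ x| ≤ ∫ x in Ω, |φ x| :=
    setIntegral_mono_set hφ_int.abs (ae_of_all _ fun x => abs_nonneg (φ x))
      Set.inter_subset_left.eventuallyLE
  have hentropy_k := hentropy k hk
  rw [integral_add_add_mul hBT (hint1 k hk) hfT,
    setIntegral_abs_rpow_sub_two_mul_self_mul_Tk hΩo.measurableSet hu hk
      (fun x hx => (zero_lt_one.trans (hp0.one_lt hx)).ne') (hint1 k hk)] at hentropy_k
  linarith

/-- the a priori estimate for entropy solutions (Lemma 1 of the paper):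
taking `ξ = 0` in the entropy inequality yields
`ā·∫_{|u|<k} P(x,w) + ∫_{|u|<k} |u|^{p₀(x)} + k·∫_{|u|≥k} |u|^{p₀(x)−1}
  ≤ k·‖f‖₁ + ‖φ‖₁`. -/
theorem entropy_solution_apriori_estimate
    {n : ℕ}
    (Ω : Set (Fin n → ℝ)) (hΩo : IsOpen Ω) (hΩc : IsConnected Ω)
    (p0 : (Fin n → ℝ) → ℝ) (p : Fin n → (Fin n → ℝ) → ℝ)
    (hp0 : IsVarExp Ω p0) (hp : ∀ i, IsVarExp Ω (p i))
    (a : (Fin n → ℝ) → ℝ → (Fin n → ℝ) → (Fin n → ℝ))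
    (abar : ℝ) (habar : 0 < abar)
    (φ : (Fin n → ℝ) → ℝ) (hφ_nonneg : ∀ x ∈ Ω, 0 ≤ φ x) (hφ_int : IntegrableOn φ Ω)
    (ha_coer : ∀ᵐ x ∂(volume.restrict Ω), ∀ (s0 : ℝ) (s : Fin n → ℝ),
      abar * Pfun p x s - φ x ≤ dotP (a x s0 s) s)
    (b : (Fin n → ℝ) → ℝ → (Fin n → ℝ) → ℝ)
    (hb_sign : ∀ᵐ x ∂(volume.restrict Ω), ∀ (s0 : ℝ) (s : Fin n → ℝ),
      0 ≤ b x s0 s * s0)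
    (f : (Fin n → ℝ) → ℝ) (hf : IntegrableOn f Ω)
    (u : (Fin n → ℝ) → ℝ) (w : (Fin n → ℝ) → Fin n → ℝ)
    (hu : Measurable u) (hw : Measurable w)
    (hB : IntegrableOn (fun x => b x (u x) (w x)) Ω)
    -- finiteness of the integrals appearing in the entropy inequality with ξ = 0
    (hint1 : ∀ k > (0:ℝ),
      IntegrableOn (fun x => |u x| ^ (p0 x - 2) * u x * Tk k (u x)) Ω)
    (hint2 : ∀ k > (0:ℝ),
      IntegrableOn (fun x => dotP (a x (u x) (w x)) (w x)) (Ω ∩ {x | |u x| < k}))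
    -- the entropy inequality with test function ξ = 0
    (hentropy : ∀ k > (0:ℝ),
      (∫ x in Ω,
          (b x (u x) (w x) + |u x| ^ (p0 x - 2) * u x + f x) * Tk k (u x)) +
        (∫ x in Ω ∩ {x | |u x| < k}, dotP (a x (u x) (w x)) (w x)) ≤ 0) :
    ∀ k > (0:ℝ),
      abar * (∫ x in Ω ∩ {x | |u x| < k}, Pfun p x (w x)) +
        (∫ x in Ω ∩ {x | |u x| < k}, |u x| ^ p0 x) +
        k * (∫ x in Ω ∩ {x | k ≤ |u x|}, |u x| ^ (p0 x - 1)) ≤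
      k * (∫ x in Ω, |f x|) + (∫ x in Ω, |φ x|) :=
  entropy_solution_apriori_estimate_general Ω hΩo p0 p hp0 a abar habar φ hφ_int ha_coer b hb_sign f
    hf u w hu hB hint1 hint2 hentropy
end
end

section
/- Let Ω ⊆ ℝ^n be a domain with Lebesgue measure and p_0, p_1, …, p_n variable exponents on Ω. Let a : Ω × ℝ × ℝ^n → ℝ^n satisfy a(x,s_0,s)·s ≥ ā·P(x,s) − φ(x) with ā > 0 and 0 ≤ φ ∈ L_1(Ω); let b : Ω × ℝ × ℝ^n → ℝ satisfy b(x,s_0,s)·s_0 ≥ 0; let f ∈ L_1(Ω). Let u : Ω → ℝ and w : Ω → ℝ^n be measurable with B := b(·,u,w) ∈ L_1(Ω) and meas{ |u| ≥ h } → 0 as h → ∞, and suppose that for all k, h > 0 all integrals below are finite and the entropy inequality with test function ξ = T_h(u) holds: ∫_Ω (B + |u|^{p_0(x)−2}u + f)·T_{k,h}(u) dx + ∫_{{x : h ≤ |u| < k+h}} a(x,u,w)·w dx ≤ 0, where T_{k,h}(r) = T_k(r − T_h(r)). Then for every k > 0: lim_{h→∞} ∫_{{x : h ≤ |u| < k+h}}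 P(x,w) dx = 0. -/
open MeasureTheory Filter Topology Real

noncomputable section

/-- The double truncation `T_{k,h}(r) = T_k(r − T_h(r))`. -/
def Tkh (k h r : ℝ) : ℝ := Tk k (r - Tk h r)

/-!
Test the entropy inequality with `T_{k,h}(u)`. Since `T_{k,h}` has the sign of its argument, the
terms `b(·,u,w) T_{k,h}(u)` and `|u|^{p₀-2} u T_{k,h}(u)` are nonnegative; since `|T_{k,h}| ≤ k`
and `T_{k,h}(u) = 0` where `|u| < h`, what remains gives `∫_{h ≤ |u| < k+h} a·w ≤ k ∫_{|u| ≥ h} |f|`.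
Coercivity turns this into `ā ∫_{h ≤ |u| < k+h} P(x,w) ≤ ∫_{h ≤ |u| < k+h} φ + k ∫_{|u| ≥ h} |f|`,
and both terms on the right vanish as `h → ∞` by absolute continuity of the integral, because
`meas {|u| ≥ h} → 0`.
-/

theorem Tkh_nonneg {k h r : ℝ} (hk : 0 ≤ k) (hh : 0 ≤ h) (hr : 0 ≤ r) : 0 ≤ Tkh k h r := by
  have : Tk h r ≤ r := max_le (by linarith) (min_le_right _ _)
  exact le_max_of_le_right (le_min hk (by linarith))

theorem Tkh_nonpos {k h r : ℝ} (hk : 0 ≤ k) (hh : 0 ≤ h) (hr : r ≤ 0) : Tkh k h r ≤ 0 := by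
  have : r ≤ Tk h r := le_max_of_le_right (le_min (by linarith) le_rfl)
  exact max_le (by linarith) ((min_le_right _ _).trans (by linarith))

theorem abs_Tkh_le {k h r : ℝ} (hk : 0 ≤ k) : |Tkh k h r| ≤ k :=
  abs_le.2 ⟨le_max_left _ _, max_le (by linarith) (min_le_left _ _)⟩

theorem Tkh_eq_zero_of_abs_lt {k h r : ℝ} (hk : 0 ≤ k) (hr : |r| < h) : Tkh k h r = 0 := by
  obtain ⟨hr₁, hr₂⟩ := abs_lt.1 hr
  have : Tk h r = r := by rw [Tk, min_eq_right hr₂.le, max_eq_right (by linarith)]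
  rw [Tkh, this, sub_self, Tk, min_eq_right hk, max_eq_right (by linarith)]

theorem mul_Tkh_nonneg {k h r c : ℝ} (hk : 0 ≤ k) (hh : 0 ≤ h) (hcr : 0 ≤ c * r) :
    0 ≤ c * Tkh k h r := by
  rcases lt_trichotomy r 0 with hr | rfl | hr
  · exact mul_nonneg_of_nonpos_of_nonpos (nonpos_of_mul_nonneg_left hcr hr)
      (Tkh_nonpos hk hh hr.le)
  · rcases hh.lt_or_eq with hh | rfl
    · rw [Tkh_eq_zero_of_abs_lt hk (by simpa using hh), mul_zero]
    · simp [Tkh, Tk, hk]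
  · exact mul_nonneg (nonneg_of_mul_nonneg_left hcr hr) (Tkh_nonneg hk hh hr.le)

theorem neg_entropy_integrand_le {k h B q f r : ℝ} (hk : 0 ≤ k) (hh : 0 ≤ h)
    (hBr : 0 ≤ B * r) :
    -((B + |r| ^ q * r + f) * Tkh k h r) ≤ if h ≤ |r| then k * |f| else 0 := by
  have hB : 0 ≤ B * Tkh k h r := mul_Tkh_nonneg hk hh hBr
  have hpow : 0 ≤ |r| ^ q * r * Tkh k h r := by
    refine mul_Tkh_nonneg hk hh ?_
    rw [mul_assoc]
    exact mul_nonneg (rpow_nonneg (abs_nonneg r) q) (mul_self_nonneg r)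
  split_ifs with hr
  · have hf : -(f * Tkh k h r) ≤ k * |f| :=
      calc -(f * Tkh k h r) ≤ |f| * |Tkh k h r| := (neg_le_abs _).trans (abs_mul _ _).le
        _ ≤ |f| * k := mul_le_mul_of_nonneg_left (abs_Tkh_le hk) (abs_nonneg f)
        _ = k * |f| := mul_comm _ _
    linarith
  · rw [Tkh_eq_zero_of_abs_lt hk (not_le.1 hr)]
    simp

section

variable {α : Type*} [MeasurableSpace α] {μ : Measure α}

theorem neg_integral_entropy_le {s : Set α} {k h : ℝ} {B q f u : α → ℝ}
    (hk : 0 ≤ k) (hh : 0 ≤ h) (hu : Measurable u) (hf : IntegrableOn f s μ)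
    (hE : IntegrableOn (fun x => (B x + |u x| ^ q x * u x + f x) * Tkh k h (u x)) s μ)
    (hB : ∀ᵐ x ∂μ.restrict s, 0 ≤ B x * u x) :
    -∫ x in s, (B x + |u x| ^ q x * u x + f x) * Tkh k h (u x) ∂μ ≤
      k * ∫ x in s ∩ {x | h ≤ |u x|}, |f x| ∂μ := by
  have hS : MeasurableSet {x | h ≤ |u x|} := measurableSet_le measurable_const hu.abs
  rw [← integral_neg, ← integral_const_mul, ← setIntegral_indicator hS]
  refine integral_mono_ae hE.neg ((hf.abs.const_mul k).indicator hS) ?_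
  filter_upwards [hB] with x hx
  simpa only [Pi.neg_apply, Set.indicator_apply, Set.mem_ofPred_eq] using
    neg_entropy_integrand_le hk hh hx

theorem mul_setIntegral_le_of_ae_le {s : Set α} {c : ℝ} {g D φ : α → ℝ} (hc : 0 ≤ c)
    (hg : ∀ x, 0 ≤ g x) (hD : IntegrableOn D s μ) (hφ : IntegrableOn φ s μ)
    (hle : ∀ᵐ x ∂μ.restrict s, c * g x - φ x ≤ D x) :
    c * ∫ x in s, g x ∂μ ≤ (∫ x in s, D x ∂μ) + ∫ x in s, φ x ∂μ := by
  rw [← integral_const_mul, ← integral_add hD hφ]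
  refine integral_mono_of_nonneg (Eventually.of_forall fun x => mul_nonneg hc (hg x))
    (hD.add hφ) ?_
  filter_upwards [hle] with x hx
  linarith

theorem tendsto_setIntegral_inter_nhds_zero {ι : Type*} {l : Filter ι} {s : Set α}
    {t : ι → Set α} {f : α → ℝ} (hf : IntegrableOn f s μ) (ht : ∀ i, MeasurableSet (t i))
    (hμ : Tendsto (fun i => μ (s ∩ t i)) l (𝓝 0)) :
    Tendsto (fun i => ∫ x in s ∩ t i, f x ∂μ) l (𝓝 0) := by
  have hμ' : Tendsto (fun i => μ.restrict s (t i)) l (𝓝 0) := by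
    simpa only [Measure.restrict_apply (ht _), Set.inter_comm] using hμ
  simpa only [Measure.restrict_restrict (ht _), Set.inter_comm] using
    hf.tendsto_setIntegral_nhds_zero hμ'

end

theorem annulus_energy_tendsto_zero_general
    {n : ℕ}
    (Ω : Set (Fin n → ℝ))
    (p0 : (Fin n → ℝ) → ℝ) (p : Fin n → (Fin n → ℝ) → ℝ)
    (a : (Fin n → ℝ) → ℝ → (Fin n → ℝ) → (Fin n → ℝ))
    (abar : ℝ) (habar : 0 < abar)
    (φ : (Fin n → ℝ) → ℝ) (hφ_int : IntegrableOn φ Ω)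
    (ha_coer : ∀ᵐ x ∂(volume.restrict Ω), ∀ (s0 : ℝ) (s : Fin n → ℝ),
      abar * Pfun p x s - φ x ≤ dotP (a x s0 s) s)
    (b : (Fin n → ℝ) → ℝ → (Fin n → ℝ) → ℝ)
    (hb_sign : ∀ᵐ x ∂(volume.restrict Ω), ∀ (s0 : ℝ) (s : Fin n → ℝ),
      0 ≤ b x s0 s * s0)
    (f : (Fin n → ℝ) → ℝ) (hf : IntegrableOn f Ω)
    (u : (Fin n → ℝ) → ℝ) (w : (Fin n → ℝ) → Fin n → ℝ)
    (hu : Measurable u)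
    -- the tails of u have vanishing measure
    (htail : Tendsto (fun h : ℝ => volume (Ω ∩ {x | h ≤ |u x|})) atTop (𝓝 0))
    -- finiteness of the integrals in the entropy inequality with ξ = T_h(u)
    (hint1 : ∀ k > (0:ℝ), ∀ h > (0:ℝ),
      IntegrableOn (fun x =>
        (b x (u x) (w x) + |u x| ^ (p0 x - 2) * u x + f x) * Tkh k h (u x)) Ω)
    (hint2 : ∀ k > (0:ℝ), ∀ h > (0:ℝ),
      IntegrableOn (fun x => dotP (a x (u x) (w x)) (w x))
        (Ω ∩ {x | h ≤ |u x| ∧ |u x| < k + h}))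
    -- the entropy inequality with test function ξ = T_h(u)
    (hentropy : ∀ k > (0:ℝ), ∀ h > (0:ℝ),
      (∫ x in Ω,
          (b x (u x) (w x) + |u x| ^ (p0 x - 2) * u x + f x) * Tkh k h (u x)) +
        (∫ x in Ω ∩ {x | h ≤ |u x| ∧ |u x| < k + h},
          dotP (a x (u x) (w x)) (w x)) ≤ 0) :
    ∀ k > (0:ℝ),
      Tendsto (fun h : ℝ =>
          ∫ x in Ω ∩ {x | h ≤ |u x| ∧ |u x| < k + h}, Pfun p x (w x))
        atTop (𝓝 0) := by
  intro k hk
  have hS : ∀ h : ℝ, MeasurableSet {x | h ≤ |u x|} := fun h =>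
    measurableSet_le measurable_const hu.abs
  have hA : ∀ h : ℝ, MeasurableSet {x | h ≤ |u x| ∧ |u x| < k + h} := fun h =>
    (hS h).inter (measurableSet_lt hu.abs measurable_const)
  have hφA := tendsto_setIntegral_inter_nhds_zero hφ_int hA <|
    tendsto_of_tendsto_of_tendsto_of_le_of_le tendsto_const_nhds htail (fun _ => zero_le)
      fun h => measure_mono (Set.inter_subset_inter_right Ω fun _ hx => hx.1)
  have hfS := tendsto_setIntegral_inter_nhds_zero hf.abs hS htail
  have henergy : ∀ h > (0:ℝ), ∫ x in Ω ∩ {x | h ≤ |u x| ∧ |u x| < k + h}, Pfun p x (w x) ≤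
      ((∫ x in Ω ∩ {x | h ≤ |u x| ∧ |u x| < k + h}, φ x) +
        k * ∫ x in Ω ∩ {x | h ≤ |u x|}, |f x|) / abar := by
    intro h hh
    have hcoercive := mul_setIntegral_le_of_ae_le habar.le (fun x => Pfun_nonneg p x (w x))
      (hint2 k hk h hh) (hφ_int.mono_set Set.inter_subset_left) <|
      (ae_restrict_of_ae_restrict_of_subset Set.inter_subset_left ha_coer).mono
        fun x hx => hx (u x) (w x)
    have hdissipative := neg_integral_entropy_le hk.le hh.le hu hf (hint1 k hk h hh)
      (hb_sign.mono fun x hx => hx (u x) (w x))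
    rw [le_div_iff₀' habar]
    linarith [hentropy k hk h hh]
  refine tendsto_of_tendsto_of_tendsto_of_le_of_le' tendsto_const_nhds
    (by simpa using (hφA.add (hfS.const_mul k)).div_const abar) ?_ ?_
  · exact Eventually.of_forall fun h => integral_nonneg fun x => Pfun_nonneg p x (w x)
  · filter_upwards [eventually_gt_atTop 0] using henergy

/-- Lemma 3 of the paper: for an entropy solution, the energy over the
annuli `{h ≤ |u| < k+h}` vanishes as `h → ∞`. -/
theorem annulus_energy_tendsto_zero
    {n : ℕ}
    (Ω : Set (Fin n → ℝ)) (hΩo : IsOpen Ω) (hΩc : IsConnected Ω)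
    (p0 : (Fin n → ℝ) → ℝ) (p : Fin n → (Fin n → ℝ) → ℝ)
    (hp0 : IsVarExp Ω p0) (hp : ∀ i, IsVarExp Ω (p i))
    (a : (Fin n → ℝ) → ℝ → (Fin n → ℝ) → (Fin n → ℝ))
    (abar : ℝ) (habar : 0 < abar)
    (φ : (Fin n → ℝ) → ℝ) (hφ_nonneg : ∀ x ∈ Ω, 0 ≤ φ x) (hφ_int : IntegrableOn φ Ω)
    (ha_coer : ∀ᵐ x ∂(volume.restrict Ω), ∀ (s0 : ℝ) (s : Fin n → ℝ),
      abar * Pfun p x s - φ x ≤ dotP (a x s0 s) s)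
    (b : (Fin n → ℝ) → ℝ → (Fin n → ℝ) → ℝ)
    (hb_sign : ∀ᵐ x ∂(volume.restrict Ω), ∀ (s0 : ℝ) (s : Fin n → ℝ),
      0 ≤ b x s0 s * s0)
    (f : (Fin n → ℝ) → ℝ) (hf : IntegrableOn f Ω)
    (u : (Fin n → ℝ) → ℝ) (w : (Fin n → ℝ) → Fin n → ℝ)
    (hu : Measurable u) (hw : Measurable w)
    (hB : IntegrableOn (fun x => b x (u x) (w x)) Ω)
    -- the tails of u have vanishing measure
    (htail : Tendsto (fun h : ℝ => volume (Ω ∩ {x | h ≤ |u x|})) atTop (𝓝 0))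
    -- finiteness of the integrals in the entropy inequality with ξ = T_h(u)
    (hint1 : ∀ k > (0:ℝ), ∀ h > (0:ℝ),
      IntegrableOn (fun x =>
        (b x (u x) (w x) + |u x| ^ (p0 x - 2) * u x + f x) * Tkh k h (u x)) Ω)
    (hint2 : ∀ k > (0:ℝ), ∀ h > (0:ℝ),
      IntegrableOn (fun x => dotP (a x (u x) (w x)) (w x))
        (Ω ∩ {x | h ≤ |u x| ∧ |u x| < k + h}))
    -- the entropy inequality with test function ξ = T_h(u)
    (hentropy : ∀ k > (0:ℝ), ∀ h > (0:ℝ),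
      (∫ x in Ω,
          (b x (u x) (w x) + |u x| ^ (p0 x - 2) * u x + f x) * Tkh k h (u x)) +
        (∫ x in Ω ∩ {x | h ≤ |u x| ∧ |u x| < k + h},
          dotP (a x (u x) (w x)) (w x)) ≤ 0) :
    ∀ k > (0:ℝ),
      Tendsto (fun h : ℝ =>
          ∫ x in Ω ∩ {x | h ≤ |u x| ∧ |u x| < k + h}, Pfun p x (w x))
        atTop (𝓝 0) :=
  annulus_energy_tendsto_zero_general Ω p0 p a abar habar φ hφ_int ha_coer b hb_sign f hf u w hu
    htail hint1 hint2 hentropy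
end
end

section
/- Let Q ⊆ ℝ^n be a (possibly unbounded) domain with Lebesgue measure and let p be a variable exponent on Q. Let v^j (j ∈ ℕ) and v be measurable functions on Q such that the sequence (v^j) is bounded in L_{p(·)}(Q) (i.e. sup_j ‖v^j‖_{p(·)} < ∞) and v^j → v almost everywhere in Q as j → ∞. Then v ∈ L_{p(·)}(Q) and v^j converges to v weakly in L_{p(·)}(Q), that is, for every g with ∫_Q |g(x)|^{p'(x)} dx < ∞ one has ∫_Q v^j g dx → ∫_Q v g dx as j → ∞. -/
open MeasureTheory Filter Topology Real

noncomputable section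

/-!
Boundedness of the Luxemburg norms bounds the modulars `ρ(v j) = ∫ |v j|^p` uniformly; by Fatou
`vlim` has finite modular, and `|a - b|^p ≤ 2^p⁺ (|a|^p + |b|^p)` bounds `ρ(v j - vlim)` uniformly
by some `B`. For `g` with finite `p'`-modular and `0 < δ ≤ 1`, Young's inequality applied to
`(δ a) (b / δ)` gives `|a b| ≤ δ |a|^p + |b / δ|^p'`, hence
`|(v j - vlim) g| ≤ δ |v j - vlim|^p + min |(v j - vlim) g| |g / δ|^p'`.
The last term tends to `0` in `L¹` by dominated convergence, so `∫ |(v j - vlim) g|` is eventually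
at most `δ B` plus an arbitrarily small quantity, for every `δ`.
-/

namespace Real

theorem abs_mul_le_rpow_add_rpow_conjExponent {p : ℝ} (hp : 1 < p) (a b : ℝ) :
    |a * b| ≤ |a| ^ p + |b| ^ (p / (p - 1)) := by
  have hpq := HolderConjugate.conjExponent hp
  rw [abs_mul]
  refine (young_inequality_of_nonneg (abs_nonneg a) (abs_nonneg b) hpq).trans (add_le_add ?_ ?_)
  · exact div_le_self (rpow_nonneg (abs_nonneg a) p) hpq.lt.le
  · exact div_le_self (rpow_nonneg (abs_nonneg b) _) hpq.symm.lt.le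

theorem abs_mul_le_mul_rpow_add_rpow_conjExponent {p δ : ℝ} (hp : 1 < p) (hδ : 0 < δ)
    (hδ₁ : δ ≤ 1) (a b : ℝ) : |a * b| ≤ δ * |a| ^ p + |b / δ| ^ (p / (p - 1)) := by
  have hδp : δ ^ p ≤ δ := by
    simpa using rpow_le_rpow_of_exponent_ge hδ hδ₁ hp.le
  calc |a * b| = |(δ * a) * (b / δ)| := by field_simp
    _ ≤ |δ * a| ^ p + |b / δ| ^ (p / (p - 1)) := abs_mul_le_rpow_add_rpow_conjExponent hp _ _
    _ ≤ δ * |a| ^ p + |b / δ| ^ (p / (p - 1)) := by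
      rw [abs_mul, abs_of_pos hδ, mul_rpow hδ.le (abs_nonneg a)]
      gcongr

theorem rpow_le_max_one_rpow {x e E : ℝ} (hx : 0 ≤ x) (he : 0 ≤ e) (heE : e ≤ E) :
    x ^ e ≤ max x 1 ^ E :=
  (rpow_le_rpow hx (le_max_left x 1) he).trans
    (rpow_le_rpow_of_exponent_le (le_max_right x 1) heE)

theorem abs_sub_rpow_le {a b e E : ℝ} (he : 0 ≤ e) (heE : e ≤ E) :
    |a - b| ^ e ≤ 2 ^ E * (|a| ^ e + |b| ^ e) := by
  have h2 : (2 : ℝ) ^ e ≤ 2 ^ E := rpow_le_rpow_of_exponent_le one_le_two heE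
  have hmax : |a - b| ≤ 2 * max |a| |b| := by
    linarith [abs_sub a b, le_max_left |a| |b|, le_max_right |a| |b|]
  calc |a - b| ^ e ≤ (2 * max |a| |b|) ^ e := rpow_le_rpow (abs_nonneg _) hmax he
    _ = 2 ^ e * max |a| |b| ^ e := mul_rpow zero_le_two (le_max_of_le_left (abs_nonneg a))
    _ ≤ 2 ^ E * (|a| ^ e + |b| ^ e) := by
      gcongr
      rcases le_total |a| |b| with h | h
      · rw [max_eq_right h]; exact le_add_of_nonneg_left (by positivity)
      · rw [max_eq_left h]; exact le_add_of_nonneg_right (by positivity)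

end Real

theorem tendsto_zero_of_forall_le_mul_add {f : ℕ → ℝ} {B : ℝ} (hf : ∀ j, 0 ≤ f j)
    (h : ∀ δ : ℝ, 0 < δ → δ ≤ 1 → ∃ r : ℕ → ℝ, Tendsto r atTop (𝓝 0) ∧ ∀ j, f j ≤ δ * B + r j) :
    Tendsto f atTop (𝓝 0) := by
  rw [Metric.tendsto_atTop]
  intro ε hε
  obtain ⟨δ, hδ, hδ₁, hδB⟩ : ∃ δ : ℝ, 0 < δ ∧ δ ≤ 1 ∧ δ * B < ε / 2 := by
    refine ⟨min 1 (ε / (4 * (|B| + 1))), by positivity, min_le_left _ _, ?_⟩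
    have hle : min 1 (ε / (4 * (|B| + 1))) ≤ ε / (4 * (|B| + 1)) := min_le_right _ _
    have hB : B ≤ |B| := le_abs_self B
    have hmul : ε / (4 * (|B| + 1)) * (|B| + 1) = ε / 4 := by field_simp
    nlinarith [abs_nonneg B, (by positivity : 0 < min 1 (ε / (4 * (|B| + 1))))]
  obtain ⟨r, hr, hfr⟩ := h δ hδ hδ₁
  obtain ⟨N, hN⟩ := Metric.tendsto_atTop.1 hr (ε / 2) (half_pos hε)
  refine ⟨N, fun j hj => ?_⟩
  have hrj := hN j hj
  rw [Real.dist_eq, sub_zero] at hrj ⊢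
  rw [abs_of_nonneg (hf j)]
  linarith [hfr j, (abs_lt.1 hrj).2]

section Modular

variable {α : Type*} [MeasurableSpace α] {μ : Measure α} {p : α → ℝ}

theorem integrable_abs_const_mul_rpow {w : α → ℝ} {pM : ℝ} (hw : AEMeasurable w μ)
    (hp : AEMeasurable p μ) (hpb : ∀ᵐ x ∂μ, 0 ≤ p x ∧ p x ≤ pM)
    (hint : Integrable (fun x => |w x| ^ p x) μ) (c : ℝ) :
    Integrable (fun x => |c * w x| ^ p x) μ := by
  refine (hint.const_mul (max |c| 1 ^ pM)).mono
    ((hw.const_mul c).abs.pow hp).aestronglyMeasurable ?_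
  filter_upwards [hpb] with x ⟨hp0, hpM⟩
  rw [Real.norm_of_nonneg (by positivity), Real.norm_of_nonneg (by positivity), abs_mul,
    Real.mul_rpow (abs_nonneg c) (abs_nonneg _)]
  gcongr
  exact Real.rpow_le_max_one_rpow (abs_nonneg c) hp0 hpM

theorem integrable_mul_of_integrable_rpow {f g : α → ℝ} (hf : AEMeasurable f μ)
    (hg : AEMeasurable g μ) (hp : ∀ᵐ x ∂μ, 1 < p x)
    (hf_int : Integrable (fun x => |f x| ^ p x) μ)
    (hg_int : Integrable (fun x => |g x| ^ (p x / (p x - 1))) μ) :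
    Integrable (fun x => f x * g x) μ := by
  refine (hf_int.add hg_int).mono (hf.mul hg).aestronglyMeasurable ?_
  filter_upwards [hp] with x hx
  rw [Real.norm_eq_abs, Pi.add_apply, Real.norm_of_nonneg (by positivity)]
  exact Real.abs_mul_le_rpow_add_rpow_conjExponent hx _ _

theorem integrable_abs_sub_rpow {f g : α → ℝ} {pM : ℝ} (hf : AEMeasurable f μ)
    (hg : AEMeasurable g μ) (hp : AEMeasurable p μ) (hpb : ∀ᵐ x ∂μ, 0 ≤ p x ∧ p x ≤ pM)
    (hf_int : Integrable (fun x => |f x| ^ p x) μ) (hg_int : Integrable (fun x => |g x| ^ p x) μ) :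
    Integrable (fun x => |f x - g x| ^ p x) μ := by
  refine ((hf_int.add hg_int).const_mul (2 ^ pM)).mono
    ((hf.sub hg).abs.pow hp).aestronglyMeasurable ?_
  filter_upwards [hpb] with x ⟨hp0, hpM⟩
  rw [Pi.add_apply, Real.norm_of_nonneg (by positivity), Real.norm_of_nonneg (by positivity)]
  exact Real.abs_sub_rpow_le hp0 hpM

theorem integral_abs_sub_rpow_le {f g : α → ℝ} {pM : ℝ} (hf : AEMeasurable f μ)
    (hg : AEMeasurable g μ) (hp : AEMeasurable p μ) (hpb : ∀ᵐ x ∂μ, 0 ≤ p x ∧ p x ≤ pM)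
    (hf_int : Integrable (fun x => |f x| ^ p x) μ) (hg_int : Integrable (fun x => |g x| ^ p x) μ) :
    ∫ x, |f x - g x| ^ p x ∂μ ≤ 2 ^ pM * (∫ x, |f x| ^ p x ∂μ + ∫ x, |g x| ^ p x ∂μ) := by
  rw [← integral_add hf_int hg_int, ← integral_const_mul]
  refine integral_mono_ae (integrable_abs_sub_rpow hf hg hp hpb hf_int hg_int)
    ((hf_int.add hg_int).const_mul _) ?_
  filter_upwards [hpb] with x ⟨hp0, hpM⟩
  exact Real.abs_sub_rpow_le hp0 hpM

theorem integrable_of_tendsto_ae_of_integral_norm_le {E : Type*} [NormedAddCommGroup E]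
    {f : ℕ → α → E} {F : α → E} {B : ℝ} (hf : ∀ j, Integrable (f j) μ)
    (hbd : ∀ j, ∫ x, ‖f j x‖ ∂μ ≤ B) (hF : AEStronglyMeasurable F μ)
    (hlim : ∀ᵐ x ∂μ, Tendsto (fun j => f j x) atTop (𝓝 (F x))) : Integrable F μ := by
  have hF_le : eLpNorm F 1 μ ≤ ENNReal.ofReal B := by
    refine Lp.eLpNorm_le_of_ae_tendsto (Eventually.of_forall fun j => ?_) (fun j => (hf j).1) hlim
    rw [eLpNorm_one_eq_lintegral_enorm, ← ofReal_integral_norm_eq_lintegral_enorm (hf j)]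
    exact ENNReal.ofReal_le_ofReal (hbd j)
  exact memLp_one_iff_integrable.1 ⟨hF, hF_le.trans_lt ENNReal.ofReal_lt_top⟩

theorem tendsto_integral_abs_mul_of_tendsto_ae_zero {pm B : ℝ} (hpm : 1 < pm)
    (hp : AEMeasurable p μ) (hpb : ∀ᵐ x ∂μ, pm ≤ p x) {u : ℕ → α → ℝ}
    (hu : ∀ j, AEMeasurable (u j) μ) (hu_int : ∀ j, Integrable (fun x => |u j x| ^ p x) μ)
    (hu_bdd : ∀ j, ∫ x, |u j x| ^ p x ∂μ ≤ B)
    (hu_lim : ∀ᵐ x ∂μ, Tendsto (fun j => u j x) atTop (𝓝 0)) {g : α → ℝ}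
    (hg : AEMeasurable g μ) (hg_int : Integrable (fun x => |g x| ^ (p x / (p x - 1))) μ) :
    Tendsto (fun j => ∫ x, |u j x * g x| ∂μ) atTop (𝓝 0) := by
  have hp₁ : ∀ᵐ x ∂μ, 1 < p x := hpb.mono fun x hx => hpm.trans_le hx
  have hq : AEMeasurable (fun x => p x / (p x - 1)) μ := hp.div (hp.sub_const 1)
  have hqb : ∀ᵐ x ∂μ, 0 ≤ p x / (p x - 1) ∧ p x / (p x - 1) ≤ pm / (pm - 1) := by
    filter_upwards [hpb] with x hx
    have hx₁ : 0 < p x - 1 := by linarith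
    refine ⟨div_nonneg (by linarith) hx₁.le, ?_⟩
    rw [div_le_div_iff₀ hx₁ (by linarith)]
    nlinarith
  have hug : ∀ j, Integrable (fun x => |u j x * g x|) μ := fun j =>
    (integrable_mul_of_integrable_rpow (hu j) hg hp₁ (hu_int j) hg_int).abs
  refine tendsto_zero_of_forall_le_mul_add (B := B)
    (fun j => integral_nonneg fun x => abs_nonneg _) fun δ hδ hδ₁ => ?_
  set G : α → ℝ := fun x => |g x / δ| ^ (p x / (p x - 1))
  have hG : Integrable G μ := by
    simpa only [G, div_eq_inv_mul] using integrable_abs_const_mul_rpow hg hq hqb hg_int δ⁻¹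
  have hmin : ∀ j, Integrable (fun x => min |u j x * g x| (G x)) μ := fun j =>
    hG.mono ((hug j).1.inf hG.1) (Eventually.of_forall fun x => by
      rw [Real.norm_of_nonneg (le_min (abs_nonneg _) (by positivity)),
        Real.norm_of_nonneg (by positivity)]
      exact min_le_right _ _)
  refine ⟨fun j => ∫ x, min |u j x * g x| (G x) ∂μ, ?_, fun j => ?_⟩
  · rw [← integral_zero α ℝ (μ := μ)]
    refine tendsto_integral_of_dominated_convergence G (fun j => (hmin j).1) hG
      (fun j => Eventually.of_forall fun x => ?_) ?_
    · rw [Real.norm_of_nonneg (le_min (abs_nonneg _) (by positivity))]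
      exact min_le_right _ _
    · filter_upwards [hu_lim] with x hx
      have hlim := (hx.mul_const (g x)).abs.min (tendsto_const_nhds (x := G x))
      rwa [zero_mul, abs_zero, min_eq_left (by positivity)] at hlim
  · have hpt : ∀ᵐ x ∂μ, |u j x * g x| ≤ δ * |u j x| ^ p x + min |u j x * g x| (G x) := by
      filter_upwards [hp₁] with x hx
      rw [← min_add_add_left]
      exact le_min (le_add_of_nonneg_left (by positivity))
        (Real.abs_mul_le_mul_rpow_add_rpow_conjExponent hx hδ hδ₁ _ _)
    calc ∫ x, |u j x * g x| ∂μ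
        ≤ ∫ x, (δ * |u j x| ^ p x + min |u j x * g x| (G x)) ∂μ :=
          integral_mono_ae (hug j) (((hu_int j).const_mul δ).add (hmin j)) hpt
      _ = δ * ∫ x, |u j x| ^ p x ∂μ + ∫ x, min |u j x * g x| (G x) ∂μ := by
          rw [integral_add ((hu_int j).const_mul δ) (hmin j), integral_const_mul]
      _ ≤ δ * B + ∫ x, min |u j x * g x| (G x) ∂μ := by
          gcongr
          exact hu_bdd j

theorem tendsto_integral_mul_of_tendsto_ae {pm pM B : ℝ} (hpm : 1 < pm)
    (hp : AEMeasurable p μ) (hpb : ∀ᵐ x ∂μ, pm ≤ p x ∧ p x ≤ pM) {v : ℕ → α → ℝ}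
    {vlim : α → ℝ} (hv : ∀ j, AEMeasurable (v j) μ) (hvlim : AEMeasurable vlim μ)
    (hv_int : ∀ j, Integrable (fun x => |v j x| ^ p x) μ)
    (hv_bdd : ∀ j, ∫ x, |v j x| ^ p x ∂μ ≤ B)
    (hvlim_int : Integrable (fun x => |vlim x| ^ p x) μ)
    (hv_lim : ∀ᵐ x ∂μ, Tendsto (fun j => v j x) atTop (𝓝 (vlim x))) {g : α → ℝ}
    (hg : AEMeasurable g μ) (hg_int : Integrable (fun x => |g x| ^ (p x / (p x - 1))) μ) :
    Tendsto (fun j => ∫ x, v j x * g x ∂μ) atTop (𝓝 (∫ x, vlim x * g x ∂μ)) := by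
  have hp₁ : ∀ᵐ x ∂μ, 1 < p x := hpb.mono fun x hx => hpm.trans_le hx.1
  have hp₀ : ∀ᵐ x ∂μ, 0 ≤ p x ∧ p x ≤ pM :=
    hpb.mono fun x hx => ⟨(zero_le_one.trans hpm.le).trans hx.1, hx.2⟩
  have hdiff : Tendsto (fun j => ∫ x, |(v j x - vlim x) * g x| ∂μ) atTop (𝓝 0) :=
    tendsto_integral_abs_mul_of_tendsto_ae_zero (B := 2 ^ pM * (B + ∫ x, |vlim x| ^ p x ∂μ))
      hpm hp (hpb.mono fun x hx => hx.1) (fun j => (hv j).sub hvlim)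
      (fun j => integrable_abs_sub_rpow (hv j) hvlim hp hp₀ (hv_int j) hvlim_int)
      (fun j => (integral_abs_sub_rpow_le (hv j) hvlim hp hp₀ (hv_int j) hvlim_int).trans
        (by gcongr; exact hv_bdd j))
      (hv_lim.mono fun x hx => by simpa using hx.sub_const (vlim x)) hg hg_int
  have hvg : ∀ j, Integrable (fun x => v j x * g x) μ := fun j =>
    integrable_mul_of_integrable_rpow (hv j) hg hp₁ (hv_int j) hg_int
  have hvlimg := integrable_mul_of_integrable_rpow hvlim hg hp₁ hvlim_int hg_int
  rw [← tendsto_sub_nhds_zero_iff]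
  refine squeeze_zero_norm (fun j => ?_) hdiff
  rw [← integral_sub (hvg j) hvlimg]
  simpa only [sub_mul, Real.norm_eq_abs] using
    norm_integral_le_integral_norm fun x => (v j x - vlim x) * g x

end Modular

section Luxemburg

variable {n : ℕ} {Q : Set (Fin n → ℝ)} {p : (Fin n → ℝ) → ℝ} {v : (Fin n → ℝ) → ℝ}

theorem modular_div_le_inv_mul {c : ℝ} (hc : 1 ≤ c)
    (hp : ∀ᵐ x ∂(volume.restrict Q), 1 ≤ p x) (hv : IntegrableOn (fun x => |v x| ^ p x) Q) :
    modular Q p (fun x => v x / c) ≤ c⁻¹ * modular Q p v := by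
  have hc₀ : 0 < c := zero_lt_one.trans_le hc
  rw [modular, modular, ← integral_const_mul]
  refine integral_mono_of_nonneg (Eventually.of_forall fun x => by positivity)
    (hv.const_mul c⁻¹) ?_
  filter_upwards [hp] with x hx
  rw [div_eq_mul_inv, abs_mul, abs_of_pos (inv_pos.2 hc₀), Real.mul_rpow (abs_nonneg _)
    (inv_pos.2 hc₀).le, mul_comm]
  gcongr
  simpa using Real.rpow_le_rpow_of_exponent_ge (inv_pos.2 hc₀) (inv_le_one_of_one_le₀ hc) hx

theorem exists_modular_div_le_one (hp : ∀ᵐ x ∂(volume.restrict Q), 1 ≤ p x)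
    (hv : IntegrableOn (fun x => |v x| ^ p x) Q) :
    ∃ c, 0 < c ∧ modular Q p (fun x => v x / c) ≤ 1 := by
  refine ⟨max 1 (modular Q p v), zero_lt_one.trans_le (le_max_left _ _), ?_⟩
  refine (modular_div_le_inv_mul (le_max_left _ _) hp hv).trans ?_
  rw [← div_eq_inv_mul]
  exact div_le_one_of_le₀ (le_max_right _ _) (zero_le_one.trans (le_max_left _ _))

theorem modular_div_le_one_of_luxNorm_lt {pM K : ℝ} (hv : AEMeasurable v (volume.restrict Q))
    (hp : AEMeasurable p (volume.restrict Q))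
    (hpb : ∀ᵐ x ∂(volume.restrict Q), 1 ≤ p x ∧ p x ≤ pM)
    (hv_int : IntegrableOn (fun x => |v x| ^ p x) Q) (hK : luxNorm Q p v < K) :
    modular Q p (fun x => v x / K) ≤ 1 := by
  obtain ⟨c, ⟨hc₀, hc⟩, hcK⟩ := exists_lt_of_csInf_lt
    (exists_modular_div_le_one (hpb.mono fun x hx => hx.1) hv_int) hK
  have hc_int : Integrable (fun x => |v x / c| ^ p x) (volume.restrict Q) := by
    simpa only [div_eq_inv_mul] using integrable_abs_const_mul_rpow hv hp
      (hpb.mono fun x hx => ⟨zero_le_one.trans hx.1, hx.2⟩) hv_int c⁻¹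
  refine le_trans (integral_mono_of_nonneg (Eventually.of_forall fun x => by positivity)
    hc_int ?_) hc
  filter_upwards [hpb] with x hx
  refine Real.rpow_le_rpow (abs_nonneg _) ?_ (by linarith)
  rw [abs_div, abs_div, abs_of_pos hc₀, abs_of_pos (hc₀.trans hcK)]
  gcongr

theorem modular_le_rpow_of_luxNorm_lt {pM K : ℝ} (hv : AEMeasurable v (volume.restrict Q))
    (hp : AEMeasurable p (volume.restrict Q))
    (hpb : ∀ᵐ x ∂(volume.restrict Q), 1 ≤ p x ∧ p x ≤ pM)
    (hv_int : IntegrableOn (fun x => |v x| ^ p x) Q) (hK₁ : 1 ≤ K) (hK : luxNorm Q p v < K) :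
    modular Q p v ≤ K ^ pM := by
  have hK₀ : 0 < K := zero_lt_one.trans_le hK₁
  have hvK_int : Integrable (fun x => |v x / K| ^ p x) (volume.restrict Q) := by
    simpa only [div_eq_inv_mul] using integrable_abs_const_mul_rpow hv hp
      (hpb.mono fun x hx => ⟨zero_le_one.trans hx.1, hx.2⟩) hv_int K⁻¹
  calc modular Q p v ≤ K ^ pM * modular Q p (fun x => v x / K) := by
        rw [modular, modular, ← integral_const_mul]
        refine integral_mono_ae hv_int (hvK_int.const_mul _) ?_
        filter_upwards [hpb] with x hx
        have hv_eq : |v x| = K * |v x / K| := by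
          rw [abs_div, abs_of_pos hK₀]; field_simp
        rw [hv_eq, Real.mul_rpow hK₀.le (abs_nonneg _)]
        gcongr
        exact hx.2
    _ ≤ K ^ pM := mul_le_of_le_one_right (by positivity)
        (modular_div_le_one_of_luxNorm_lt hv hp hpb hv_int hK)

end Luxemburg

theorem ae_convergence_and_boundedness_implies_weak_convergence_general
    {n : ℕ}
    (Q : Set (Fin n → ℝ)) (hQo : IsOpen Q)
    (p : (Fin n → ℝ) → ℝ) (hp : IsVarExp Q p)
    (v : ℕ → (Fin n → ℝ) → ℝ) (vlim : (Fin n → ℝ) → ℝ)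
    (hv_meas : ∀ j, Measurable (v j)) (hvlim_meas : Measurable vlim)
    -- each v j belongs to L_{p(·)}(Q) and the sequence is norm bounded
    (hv_mem : ∀ j, IntegrableOn (fun x => |v j x| ^ p x) Q)
    (hv_bdd : ∃ C : ℝ, ∀ j, luxNorm Q p (v j) ≤ C)
    -- a.e. convergence
    (hae : ∀ᵐ x ∂(volume.restrict Q), Tendsto (fun j => v j x) atTop (𝓝 (vlim x))) :
    -- the limit belongs to L_{p(·)}(Q) ...
    IntegrableOn (fun x => |vlim x| ^ p x) Q ∧
    -- ... and the convergence is weak: testing against any g ∈ L_{p'(·)}(Q)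
    (∀ g : (Fin n → ℝ) → ℝ, Measurable g →
      IntegrableOn (fun x => |g x| ^ pConj p x) Q →
      Tendsto (fun j => ∫ x in Q, v j x * g x) atTop
        (𝓝 (∫ x in Q, vlim x * g x))) := by
  obtain ⟨hp_cont, pm, pM, hpm, hpb⟩ := hp
  have hpμ : AEMeasurable p (volume.restrict Q) := hp_cont.aemeasurable hQo.measurableSet
  have hpbμ : ∀ᵐ x ∂(volume.restrict Q), pm ≤ p x ∧ p x ≤ pM :=
    (ae_restrict_mem hQo.measurableSet).mono hpb
  obtain ⟨C, hC⟩ := hv_bdd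
  have hv_mod : ∀ j, ∫ x in Q, |v j x| ^ p x ≤ (|C| + 1) ^ pM := fun j =>
    modular_le_rpow_of_luxNorm_lt (hv_meas j).aemeasurable hpμ
      (hpbμ.mono fun x hx => ⟨hpm.le.trans hx.1, hx.2⟩) (hv_mem j)
      (by linarith [abs_nonneg C]) ((hC j).trans_lt (by linarith [le_abs_self C]))
  have hvlim_int : IntegrableOn (fun x => |vlim x| ^ p x) Q := by
    refine integrable_of_tendsto_ae_of_integral_norm_le (B := (|C| + 1) ^ pM) hv_mem
      (fun j => by
        simpa only [Real.norm_eq_abs, abs_abs, abs_of_nonneg (Real.rpow_nonneg (abs_nonneg _) _)]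
          using hv_mod j)
      (hvlim_meas.abs.aemeasurable.pow hpμ).aestronglyMeasurable ?_
    filter_upwards [hae, hpbμ] with x hx hpx
    exact hx.abs.rpow_const (Or.inr (by linarith [hpx.1]))
  exact ⟨hvlim_int, fun g hg hg_int => tendsto_integral_mul_of_tendsto_ae hpm hpμ hpbμ
    (fun j => (hv_meas j).aemeasurable) hvlim_meas.aemeasurable hv_mem hv_mod hvlim_int hae
    hg.aemeasurable hg_int⟩

/-- Lemma 4 of the paper: a sequence bounded in `L_{p(·)}(Q)` that
converges a.e. converges weakly in `L_{p(·)}(Q)`. -/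
theorem ae_convergence_and_boundedness_implies_weak_convergence
    {n : ℕ}
    (Q : Set (Fin n → ℝ)) (hQo : IsOpen Q) (hQc : IsConnected Q)
    (p : (Fin n → ℝ) → ℝ) (hp : IsVarExp Q p)
    (v : ℕ → (Fin n → ℝ) → ℝ) (vlim : (Fin n → ℝ) → ℝ)
    (hv_meas : ∀ j, Measurable (v j)) (hvlim_meas : Measurable vlim)
    -- each v j belongs to L_{p(·)}(Q) and the sequence is norm bounded
    (hv_mem : ∀ j, IntegrableOn (fun x => |v j x| ^ p x) Q)
    (hv_bdd : ∃ C : ℝ, ∀ j, luxNorm Q p (v j) ≤ C)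
    -- a.e. convergence
    (hae : ∀ᵐ x ∂(volume.restrict Q), Tendsto (fun j => v j x) atTop (𝓝 (vlim x))) :
    -- the limit belongs to L_{p(·)}(Q) ...
    IntegrableOn (fun x => |vlim x| ^ p x) Q ∧
    -- ... and the convergence is weak: testing against any g ∈ L_{p'(·)}(Q)
    (∀ g : (Fin n → ℝ) → ℝ, Measurable g →
      IntegrableOn (fun x => |g x| ^ pConj p x) Q →
      Tendsto (fun j => ∫ x in Q, v j x * g x) atTop
        (𝓝 (∫ x in Q, vlim x * g x))) :=
  ae_convergence_and_boundedness_implies_weak_convergence_general Q hQo p hp v vlim hv_meas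
    hvlim_meas hv_mem hv_bdd hae
end
end
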